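/- arXiv:2509.20790 — 3 statements merged into one kernel-verified Lean document; each statement's English description precedes it below -/
import Mathlib

section
/- Let (Θ, Ω, f : Θ → Z) be a cardinal implementation problem such that f is surjective and Θ^una ∩ Θ^strict ⊆ Θ ⊆ Θ^strict. Then f can be UD-implemented by some stochastic finite-action mechanism if and only if f is dictatorial. -/
open Function

noncomputable section

/-- A lottery (probability distribution) on the finite outcome set `Z`. -/
def Lottery (Z : Type) [Fintype Z] : Type :=
  {y : Z → ℝ // (∀ z, 0 ≤ y z) ∧ ∑ z, y z = 1}

variable {Z : Type} [Fintype Z]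

/-- The degenerate lottery on the outcome `z`. -/
def Lottery.delta [DecidableEq Z] (z : Z) : Lottery Z :=
  ⟨fun z' => if z' = z then 1 else 0, fun z' => by positivity, by simp⟩

/-- Expected utility of the lottery `y` under the vN-M utility function `u`. -/
def expUtil (u : Z → ℝ) (y : Lottery Z) : ℝ := ∑ z, y.1 z * u z

variable {I : Type} [DecidableEq I] {S : I → Type}

/-- `s_i` is strictly dominated (for agent `i`, at cardinal state `u`, in the mechanism
with outcome function `g`) on the product set `×_j T j`. -/
def Dominated (u : I → Z → ℝ) (g : (∀ i, S i) → Lottery Z)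
    (T : ∀ j, Set (S j)) (i : I) (si : S i) : Prop :=
  ∃ si' : S i, ∀ s : ∀ j, S j, (∀ j, j ≠ i → s j ∈ T j) →
    expUtil (u i) (g (update s i si)) < expUtil (u i) (g (update s i si'))

/-- `UDk u g k i` is the set of strategies of agent `i` surviving `k` rounds of iterative
deletion of strictly dominated strategies at the cardinal state `u` (`UDk u g 0 i = S i`). -/
def UDk (u : I → Z → ℝ) (g : (∀ i, S i) → Lottery Z) : ℕ → ∀ i, Set (S i)
  | 0 => fun _ => Set.univ
  | (k + 1) => fun i => {si ∈ UDk u g k i | ¬ Dominated u g (UDk u g k) i si}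

/-- `UD(M,u)`: profiles surviving one round of deletion. -/
def UDoneSet (u : I → Z → ℝ) (g : (∀ i, S i) → Lottery Z) : Set (∀ i, S i) :=
  {s | ∀ i, s i ∈ UDk u g 1 i}

/-- `UD^∞(M,u)`: profiles surviving iterative deletion (all rounds `k ≥ 1`). -/
def UDinfSet (u : I → Z → ℝ) (g : (∀ i, S i) → Lottery Z) : Set (∀ i, S i) :=
  {s | ∀ i, ∀ k : ℕ, s i ∈ UDk u g (k + 1) i}

/-- `S_i^z`: strategies of agent `i` from which the degenerate outcome `z` is reachable. -/
def Sz [DecidableEq Z] (g : (∀ i, S i) → Lottery Z) (i : I) (z : Z) : Set (S i) :=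
  {si | ∃ s : ∀ j, S j, s i = si ∧ g s = Lottery.delta z}

/-- `×_j T j` satisfies the non-domination property at `u`. -/
def NonDomProp (u : I → Z → ℝ) (g : (∀ i, S i) → Lottery Z) (T : ∀ j, Set (S j)) : Prop :=
  ∀ i, ∀ si ∈ T i, ∀ si' : S i, ∃ s : ∀ j, S j, (∀ j, j ≠ i → s j ∈ T j) ∧
    expUtil (u i) (g (update s i si')) ≤ expUtil (u i) (g (update s i si))

/-- `u` is a cardinal representation of the ordinal state `θ`. -/
def Represents (u : I → Z → ℝ) (θ : I → Z → Z → Prop) : Prop :=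
  ∀ i z z', θ i z z' ↔ u i z' ≤ u i z

/-- `Θ*`: all ordinal states (complete and transitive preference profiles). -/
def ThetaStar (I Z : Type) : Set (I → Z → Z → Prop) :=
  {θ | ∀ i, (∀ z z', θ i z z' ∨ θ i z' z) ∧ Transitive (θ i)}

/-- `Θ^una`: ordinal states where all agents have identical preferences. -/
def ThetaUna (I Z : Type) : Set (I → Z → Z → Prop) :=
  {θ ∈ ThetaStar I Z | ∀ i j z z', θ i z z' ↔ θ j z z'}

/-- `Θ^strict`: ordinal states where no agent has non-trivial indifference. -/
def ThetaStrict (I Z : Type) : Set (I → Z → Z → Prop) :=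
  {θ ∈ ThetaStar I Z | ∀ i z z', θ i z z' → θ i z' z → z = z'}

/-- The strict part `≻_i^θ`. -/
def StrictPref (θ : I → Z → Z → Prop) (i : I) (z z' : Z) : Prop := θ i z z' ∧ ¬ θ i z' z

/-- Agent `i` is a dictator for `f` on `Θ`. -/
def Dictator (Θ : Set (I → Z → Z → Prop)) (f : (I → Z → Z → Prop) → Z) (i : I) : Prop :=
  ∀ θ ∈ Θ, ∀ z, z ≠ f θ → StrictPref θ i (f θ) z

/-- `(Θ, Ω)` form a cardinal implementation problem: `Θ` is a set of ordinal states, every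
member of `Ω` is a cardinal representation of some `θ ∈ Θ`, and `Ω_θ ≠ ∅` for all `θ ∈ Θ`. -/
def CIProblem (Θ : Set (I → Z → Z → Prop)) (Ω : Set (I → Z → ℝ)) : Prop :=
  Θ ⊆ ThetaStar I Z ∧ (∀ u ∈ Ω, ∃ θ ∈ Θ, Represents u θ) ∧
    ∀ θ ∈ Θ, ∃ u ∈ Ω, Represents u θ

/-- `f` is UD-implemented by the mechanism with outcome function `g`. -/
def UDImplements [DecidableEq Z] (Θ : Set (I → Z → Z → Prop)) (Ω : Set (I → Z → ℝ))
    (f : (I → Z → Z → Prop) → Z) (g : (∀ i, S i) → Lottery Z) : Prop :=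
  ∀ θ ∈ Θ, ∀ u ∈ Ω, Represents u θ → g '' UDoneSet u g = {Lottery.delta (f θ)}

/-- `f` is UD^∞-implemented by the mechanism with outcome function `g`. -/
def UDinfImplements [DecidableEq Z] (Θ : Set (I → Z → Z → Prop)) (Ω : Set (I → Z → ℝ))
    (f : (I → Z → Z → Prop) → Z) (g : (∀ i, S i) → Lottery Z) : Prop :=
  ∀ θ ∈ Θ, ∀ u ∈ Ω, Represents u θ → g '' UDinfSet u g = {Lottery.delta (f θ)}

/-- `Θ^{(i1,i2)-z}`: strict states where `z` is second-best for both `i1` and `i2`,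
whose top-ranked outcomes differ. -/
def ThetaSecond [Fintype Z] (i1 i2 : I) (z : Z) : Set (I → Z → Z → Prop) :=
  {θ ∈ ThetaStrict I Z |
    Set.ncard {z' | θ i1 z z'} = Fintype.card Z - 1 ∧
    Set.ncard {z' | θ i2 z z'} = Fintype.card Z - 1 ∧
    {z' | θ i1 z z'} ≠ {z' | θ i2 z z'}}

end
section Aux

open Function

variable {Z : Type} [Fintype Z] [DecidableEq Z]

private theorem XiongAux.delta_apply (z z' : Z) :
    (Lottery.delta z).1 z' = if z' = z then (1:ℝ) else 0 := rfl

private theorem XiongAux.expUtil_delta (u : Z → ℝ) (z : Z) :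
    expUtil u (Lottery.delta z) = u z := by
  unfold expUtil
  rw [Finset.sum_eq_single z]
  · rw [XiongAux.delta_apply, if_pos rfl, one_mul]
  · intro b _ hb
    rw [XiongAux.delta_apply, if_neg hb, zero_mul]
  · intro hz
    exact absurd (Finset.mem_univ z) hz

private theorem XiongAux.delta_inj {a b : Z} (h : Lottery.delta a = Lottery.delta b) :
    a = b := by
  by_contra hne
  have h1 : (Lottery.delta a).1 a = (Lottery.delta b).1 a := by rw [h]
  rw [XiongAux.delta_apply, XiongAux.delta_apply, if_pos rfl, if_neg hne] at h1
  exact one_ne_zero h1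

private theorem XiongAux.expUtil_le_max (u : Z → ℝ) (y : Lottery Z) {t : Z}
    (h : ∀ z, u z ≤ u t) : expUtil u y ≤ u t := by
  have h1 : expUtil u y ≤ ∑ z, y.1 z * u t := by
    apply Finset.sum_le_sum
    intro z _
    exact mul_le_mul_of_nonneg_left (h z) (y.2.1 z)
  rwa [← Finset.sum_mul, y.2.2, one_mul] at h1

private theorem XiongAux.min_le_expUtil (u : Z → ℝ) (y : Lottery Z) {b : Z}
    (h : ∀ z, u b ≤ u z) : u b ≤ expUtil u y := by
  have h1 : (∑ z, y.1 z * u b) ≤ expUtil u y := by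
    apply Finset.sum_le_sum
    intro z _
    exact mul_le_mul_of_nonneg_left (h z) (y.2.1 z)
  rwa [← Finset.sum_mul, y.2.2, one_mul] at h1

variable {I : Type} [DecidableEq I] {S : I → Type}

/-- `b` strictly dominates `a` everywhere for agent `i` at utility `v`. -/
private def XiongAux.Rdom (g : (∀ i, S i) → Lottery Z) (v : Z → ℝ) (i : I) (a b : S i) :
    Prop :=
  ∀ s : ∀ j, S j, expUtil v (g (update s i a)) < expUtil v (g (update s i b))

private theorem XiongAux.mem_UD1 (u : I → Z → ℝ) (g : (∀ i, S i) → Lottery Z)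
    (i : I) (si : S i) :
    si ∈ UDk u g 1 i ↔ ∀ b, ¬ XiongAux.Rdom g (u i) i si b := by
  show si ∈ {si ∈ UDk u g 0 i | ¬ Dominated u g (UDk u g 0) i si} ↔ _
  constructor
  · rintro ⟨-, hnd⟩ b hb
    exact hnd ⟨b, fun s _ => hb s⟩
  · intro hnd
    refine ⟨Set.mem_univ si, ?_⟩
    rintro ⟨b, hb⟩
    exact hnd b (fun s => hb s (fun j _ => Set.mem_univ _))

private theorem XiongAux.exists_max_above (g : (∀ i, S i) → Lottery Z) (v : Z → ℝ)
    [∀ j, Finite (S j)] [Nonempty (∀ j, S j)] (i : I) (a : S i) :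
    ∃ b : S i, (b = a ∨ XiongAux.Rdom g v i a b) ∧ ∀ c, ¬ XiongAux.Rdom g v i b c := by
  obtain ⟨s0⟩ := (inferInstance : Nonempty (∀ j, S j))
  have htr : ∀ {x y z : S i},
      XiongAux.Rdom g v i x y → XiongAux.Rdom g v i y z → XiongAux.Rdom g v i x z :=
    fun hxy hyz s => (hxy s).trans (hyz s)
  letI : IsTrans (S i) (fun x y => XiongAux.Rdom g v i y x) :=
    ⟨fun _ _ _ h1 h2 => htr h2 h1⟩
  letI : IsIrrefl (S i) (fun x y => XiongAux.Rdom g v i y x) :=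
    ⟨fun x hx => lt_irrefl _ (hx s0)⟩
  have hwf := Finite.wellFounded_of_trans_of_irrefl (fun x y : S i => XiongAux.Rdom g v i y x)
  obtain ⟨b, hb, hmin⟩ := hwf.has_min {x | x = a ∨ XiongAux.Rdom g v i a x} ⟨a, Or.inl rfl⟩
  refine ⟨b, hb, fun c hc => ?_⟩
  have hcmem : c ∈ {x | x = a ∨ XiongAux.Rdom g v i a x} := by
    rcases hb with rfl | hab
    · exact Or.inr hc
    · exact Or.inr (htr hab hc)
  exact hmin c hcmem hc

end Aux

/-- **Theorem 1 (Xiong).** In any cardinal implementation problem with `f` surjective and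
`Θ^una ∩ Θ^strict ⊆ Θ ⊆ Θ^strict`, `f` can be UD-implemented by a stochastic
finite-action mechanism iff `f` is dictatorial. -/
theorem UD_implementable_iff_dictatorial
    {I Z : Type} [Fintype I] [Fintype Z] [DecidableEq I] [DecidableEq Z]
    (hI : 2 ≤ Fintype.card I) (hZ : 2 ≤ Fintype.card Z)
    (Θ : Set (I → Z → Z → Prop)) (Ω : Set (I → Z → ℝ)) (f : (I → Z → Z → Prop) → Z)
    (hCIP : CIProblem Θ Ω)
    (hsurj : ∀ z : Z, ∃ θ ∈ Θ, f θ = z)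
    (hsub1 : ThetaUna I Z ∩ ThetaStrict I Z ⊆ Θ) (hsub2 : Θ ⊆ ThetaStrict I Z) :
    (∃ (S : I → Type) (_ : ∀ i, Finite (S i)) (_ : ∀ i, Nonempty (S i))
        (g : (∀ i, S i) → Lottery Z), UDImplements Θ Ω f g) ↔
      ∃ i : I, Dictator Θ f i := by
  classical
  haveI : Nonempty Z := Fintype.card_pos_iff.mp (by omega)
  constructor
  · -- Necessity: UD implementation forces a dictator.
    rintro ⟨S, hfin, hne, g, himpl⟩
    by_contra hnd
    haveI := hfin
    haveI := hne
    haveI : Nonempty (∀ j, S j) := ⟨fun j => Classical.arbitrary _⟩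
    -- an injective embedding of Z into [0,1)
    obtain ⟨e, he_inj, he0, he1⟩ :
        ∃ e : Z → ℝ, Function.Injective e ∧ (∀ z, 0 ≤ e z) ∧ ∀ z, e z < 1 := by
      refine ⟨fun z => ((Fintype.equivFin Z z : ℕ) : ℝ) / (Fintype.card Z : ℝ), ?_, fun z => by positivity, ?_⟩
      · intro a b hab
        have hpos : (0:ℝ) < (Fintype.card Z : ℝ) := by
          have : 0 < Fintype.card Z := by omega
          exact_mod_cast this
        have h1 : ((Fintype.equivFin Z a : ℕ) : ℝ) = ((Fintype.equivFin Z b : ℕ) : ℝ) := by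
          have h2 := congrArg (fun r : ℝ => r * (Fintype.card Z : ℝ)) hab
          simp only at h2
          rwa [div_mul_cancel₀ _ hpos.ne', div_mul_cancel₀ _ hpos.ne'] at h2
        have h2 : (Fintype.equivFin Z a : ℕ) = (Fintype.equivFin Z b : ℕ) := by
          exact_mod_cast h1
        exact (Fintype.equivFin Z).injective (Fin.ext h2)
      · intro z
        have hpos : (0:ℝ) < (Fintype.card Z : ℝ) := by
          have : 0 < Fintype.card Z := by omega
          exact_mod_cast this
        rw [div_lt_one hpos]
        exact_mod_cast (Fintype.equivFin Z z).2
    -- unanimous states built from injective utility functions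
    have hmkstate : ∀ h : Z → ℝ, Function.Injective h →
        (fun (_ : I) (z z' : Z) => h z' ≤ h z) ∈ Θ := by
      intro h hinj
      apply hsub1
      constructor
      · exact ⟨fun i => ⟨fun z z' => le_total (h z') (h z),
          fun _ _ _ hab hbc => le_trans hbc hab⟩, fun i j z z' => Iff.rfl⟩
      · exact ⟨fun i => ⟨fun z z' => le_total (h z') (h z),
          fun _ _ _ hab hbc => le_trans hbc hab⟩,
          fun i z z' h1 h2 => hinj (le_antisymm h2 h1)⟩
    have hgetu : ∀ θ ∈ Θ, ∃ u ∈ Ω, Represents u θ := hCIP.2.2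
    -- transfer of top/bottom through representation
    have hreptop : ∀ (h : Z → ℝ) (u : I → Z → ℝ),
        Represents u (fun (_ : I) (z z' : Z) => h z' ≤ h z) →
        ∀ (i : I) (t : Z), (∀ z, h z ≤ h t) → ∀ z, u i z ≤ u i t := by
      intro h u hrep i t ht z
      exact (hrep i t z).mp (ht z)
    have hrepbot : ∀ (h : Z → ℝ) (u : I → Z → ℝ),
        Represents u (fun (_ : I) (z z' : Z) => h z' ≤ h z) →
        ∀ (i : I) (b : Z), (∀ z, h b ≤ h z) → ∀ z, u i b ≤ u i z := by
      intro h u hrep i b hb z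
      exact (hrep i z b).mp (hb z)
    -- order constructors
    have hmktop : ∀ t : Z, ∃ h : Z → ℝ, Function.Injective h ∧ (∀ z, h z ≤ h t) := by
      intro t
      refine ⟨fun z => if z = t then 2 else e z, ?_, ?_⟩
      · intro a b hab
        dsimp only at hab
        by_cases ha : a = t <;> by_cases hb : b = t
        · rw [ha, hb]
        · rw [if_pos ha, if_neg hb] at hab
          linarith [he1 b]
        · rw [if_neg ha, if_pos hb] at hab
          linarith [he1 a]
        · rw [if_neg ha, if_neg hb] at hab
          exact he_inj hab
      · intro z
        dsimp only
        by_cases hz : z = t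
        · rw [if_pos hz, if_pos rfl]
        · rw [if_neg hz, if_pos rfl]
          exact (he1 z).le.trans (by norm_num)
    have hmktopbot : ∀ a b : Z, a ≠ b →
        ∃ h : Z → ℝ, Function.Injective h ∧ (∀ z, h z ≤ h a) ∧ (∀ z, h b ≤ h z) := by
      intro a b hab
      refine ⟨fun z => if z = a then 2 else if z = b then -1 else e z, ?_, ?_, ?_⟩
      · intro x y hxy
        dsimp only at hxy
        by_cases hx : x = a <;> by_cases hy : y = a
        · rw [hx, hy]
        · rw [if_pos hx, if_neg hy] at hxy
          by_cases hy' : y = b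
          · rw [if_pos hy'] at hxy; norm_num at hxy
          · rw [if_neg hy'] at hxy
            linarith [he1 y]
        · rw [if_neg hx, if_pos hy] at hxy
          by_cases hx' : x = b
          · rw [if_pos hx'] at hxy; norm_num at hxy
          · rw [if_neg hx'] at hxy
            linarith [he1 x]
        · rw [if_neg hx, if_neg hy] at hxy
          by_cases hx' : x = b <;> by_cases hy' : y = b
          · rw [hx', hy']
          · rw [if_pos hx', if_neg hy'] at hxy
            linarith [he0 y, hxy]
          · rw [if_neg hx', if_pos hy'] at hxy
            linarith [he0 x, hxy]
          · rw [if_neg hx', if_neg hy'] at hxy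
            exact he_inj hxy
      · intro z
        dsimp only
        by_cases hz : z = a
        · rw [if_pos hz, if_pos rfl]
        · rw [if_neg hz, if_pos rfl]
          by_cases hz' : z = b
          · rw [if_pos hz']; norm_num
          · rw [if_neg hz']
            exact (he1 z).le.trans (by norm_num)
      · intro z
        dsimp only
        rw [if_neg (Ne.symm hab), if_pos rfl]
        by_cases hz : z = a
        · rw [if_pos hz]; norm_num
        · rw [if_neg hz]
          by_cases hz' : z = b
          · rw [if_pos hz']
          · rw [if_neg hz']
            linarith [he0 z]
    -- core pinning lemma
    have hpin : ∀ θ ∈ Θ, ∀ u ∈ Ω, Represents u θ → ∀ s : ∀ i, S i,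
        (∀ i, ∀ c, ¬ XiongAux.Rdom g (u i) i (s i) c) → g s = Lottery.delta (f θ) := by
      intro θ hθ u hu hrep s hs
      have hmem : s ∈ UDoneSet u g := by
        intro i
        rw [XiongAux.mem_UD1]
        exact hs i
      have himg : g s ∈ g '' UDoneSet u g := ⟨s, hmem, rfl⟩
      rw [himpl θ hθ u hu hrep] at himg
      exact himg
    -- an undominated profile exists at every cardinal state
    have hundomprof : ∀ u : I → Z → ℝ,
        ∃ s : ∀ j, S j, ∀ i, ∀ c, ¬ XiongAux.Rdom g (u i) i (s i) c := by
      intro u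
      have h1 : ∀ i, ∃ si : S i, ∀ c, ¬ XiongAux.Rdom g (u i) i si c := by
        intro i
        obtain ⟨b, _, hb⟩ := XiongAux.exists_max_above g (u i) i (Classical.arbitrary _)
        exact ⟨b, hb⟩
      choose s hs using h1
      exact ⟨s, hs⟩
    -- undominated strategies reach f θ
    have hDK : ∀ θ ∈ Θ, ∀ u ∈ Ω, Represents u θ → ∀ (i : I) (si : S i),
        (∀ c, ¬ XiongAux.Rdom g (u i) i si c) → si ∈ Sz g i (f θ) := by
      intro θ hθ u hu hrep i si hsi
      obtain ⟨s, hs⟩ := hundomprof u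
      refine ⟨update s i si, update_self i si s, ?_⟩
      apply hpin θ hθ u hu hrep
      intro j c
      by_cases hj : j = i
      · subst hj
        rw [update_self]
        exact hsi c
      · rw [update_of_ne hj]
        exact hs j c
    -- a strategy reaching a top outcome is undominated
    have hT1 : ∀ (u : I → Z → ℝ) (i : I) (t : Z), (∀ z, u i z ≤ u i t) →
        ∀ si ∈ Sz g i t, ∀ c, ¬ XiongAux.Rdom g (u i) i si c := by
      rintro u i t ht si ⟨s, hsi, hgs⟩ c hR
      have h1 := hR s
      have h2 : update s i si = s := by
        rw [← hsi]
        exact update_eq_self i s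
      rw [h2, hgs, XiongAux.expUtil_delta] at h1
      exact absurd h1 (not_lt.mpr (XiongAux.expUtil_le_max (u i) _ ht))
    -- all reachability sets are nonempty
    have hKne : ∀ (i : I) (z : Z), (Sz g i z).Nonempty := by
      intro i z
      obtain ⟨θ, hθ, hfz⟩ := hsurj z
      obtain ⟨u, hu, hrep⟩ := hgetu θ hθ
      obtain ⟨s, hs⟩ := hundomprof u
      exact ⟨s i, hfz ▸ hDK θ hθ u hu hrep i (s i) (hs i)⟩
    -- unanimity
    have hF0 : ∀ (h : Z → ℝ), Function.Injective h → ∀ (t : Z), (∀ z, h z ≤ h t) →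
        ∀ u ∈ Ω, Represents u (fun (_ : I) (z z' : Z) => h z' ≤ h z) →
        f (fun (_ : I) (z z' : Z) => h z' ≤ h z) = t := by
      intro h hinj t ht u hu hrep
      obtain ⟨θ', hθ', hf'⟩ := hsurj t
      obtain ⟨u', hu', hrep'⟩ := hgetu θ' hθ'
      obtain ⟨s, hs⟩ := hundomprof u'
      have hgs : g s = Lottery.delta t := by
        rw [hpin θ' hθ' u' hu' hrep' s hs, hf']
      have hst : ∀ (i : I) (c : S i), ¬ XiongAux.Rdom g (u i) i (s i) c := fun i =>
        hT1 u i t (fun z => hreptop h u hrep i t ht z) (s i) ⟨s, rfl, hgs⟩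
      have h2 := hpin _ (hmkstate h hinj) u hu hrep s hst
      rw [hgs] at h2
      exact (XiongAux.delta_inj h2).symm
    -- K-pinning : profiles inside the reachability sets produce the degenerate outcome
    have hKpin : ∀ (z : Z) (s : ∀ i, S i), (∀ i, s i ∈ Sz g i z) →
        g s = Lottery.delta z := by
      intro z s hs
      obtain ⟨h, hinj, ht⟩ := hmktop z
      have hθh := hmkstate h hinj
      obtain ⟨u, hu, hrep⟩ := hgetu _ hθh
      have h2 := hpin _ hθh u hu hrep s
        (fun i => hT1 u i z (fun z' => hreptop h u hrep i z ht z') (s i) (hs i))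
      rw [h2, hF0 h hinj z ht u hu hrep]
    -- tie lemma : two strategies in the same reachability set never dominate one another
    have hnoR : ∀ (w : Z) (j : I) (sa sb : S j) (v : Z → ℝ),
        sa ∈ Sz g j w → sb ∈ Sz g j w → ¬ XiongAux.Rdom g v j sa sb := by
      intro w j sa sb v ha hb hR
      have hcomp : ∀ (x : S j), x ∈ Sz g j w →
          g (update (fun l => (hKne l w).some) j x) = Lottery.delta w := by
        intro x hx
        apply hKpin w
        intro l
        by_cases hl : l = j
        · subst hl
          rw [update_self]
          exact hx
        · rw [update_of_ne hl]
          exact (hKne l w).some_mem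
      have h1 := hR (fun l => (hKne l w).some)
      rw [hcomp sa ha, hcomp sb hb] at h1
      exact lt_irrefl _ h1
    -- M1 : if t_j is agent j's top at θ, reachability of f θ implies reachability of t_j
    have hM1 : ∀ θ ∈ Θ, ∀ u ∈ Ω, Represents u θ → ∀ (j : I) (tj : Z),
        (∀ z, u j z ≤ u j tj) → ∀ sj ∈ Sz g j (f θ), sj ∈ Sz g j tj := by
      intro θ hθ u hu hrep j tj htj sj hsj
      obtain ⟨h, hinj, ht⟩ := hmktop tj
      have hθχ := hmkstate h hinj
      obtain ⟨uχ, huχ, hrepχ⟩ := hgetu _ hθχ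
      have hfχ : f (fun (_ : I) (z z' : Z) => h z' ≤ h z) = tj :=
        hF0 h hinj tj ht uχ huχ hrepχ
      obtain ⟨d, hd1, hd2⟩ := XiongAux.exists_max_above g (uχ j) j sj
      rcases hd1 with rfl | hRd
      · exact hfχ ▸ hDK _ hθχ uχ huχ hrepχ j d hd2
      · exfalso
        have hdKt : d ∈ Sz g j tj := hfχ ▸ hDK _ hθχ uχ huχ hrepχ j d hd2
        have hdKa : d ∈ Sz g j (f θ) :=
          hDK θ hθ u hu hrep j d (hT1 u j tj htj d hdKt)
        exact hnoR (f θ) j sj d (uχ j) hsj hdKa hRd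
    -- M2 : if agent j's top at θ differs from f θ then every strategy of j reaches f θ
    have hM2 : ∀ θ ∈ Θ, ∀ u ∈ Ω, Represents u θ → ∀ (j : I) (tj : Z),
        (∀ z, u j z ≤ u j tj) → tj ≠ f θ → ∀ sj : S j, sj ∈ Sz g j (f θ) := by
      intro θ hθ u hu hrep j tj htj hne' sj
      obtain ⟨h, hinj, hta, htb⟩ := hmktopbot (f θ) tj (Ne.symm hne')
      have hθσ := hmkstate h hinj
      obtain ⟨uσ, huσ, hrepσ⟩ := hgetu _ hθσ
      have hfσ : f (fun (_ : I) (z z' : Z) => h z' ≤ h z) = f θ :=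
        hF0 h hinj (f θ) hta uσ huσ hrepσ
      obtain ⟨d, hd1, hd2⟩ := XiongAux.exists_max_above g (uσ j) j sj
      rcases hd1 with rfl | hRd
      · exact hfσ ▸ hDK _ hθσ uσ huσ hrepσ j d hd2
      · exfalso
        have hdKa : d ∈ Sz g j (f θ) := hfσ ▸ hDK _ hθσ uσ huσ hrepσ j d hd2
        have hdKt : d ∈ Sz g j tj := hM1 θ hθ u hu hrep j tj htj d hdKa
        have hcomp : g (update (fun l => (hKne l tj).some) j d) = Lottery.delta tj := by
          apply hKpin tj
          intro l
          by_cases hl : l = j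
          · subst hl
            rw [update_self]
            exact hdKt
          · rw [update_of_ne hl]
            exact (hKne l tj).some_mem
        have h2 := hRd (fun l => (hKne l tj).some)
        rw [hcomp, XiongAux.expUtil_delta] at h2
        have h3 : uσ j tj ≤ expUtil (uσ j) (g (update (fun l => (hKne l tj).some) j sj)) :=
          XiongAux.min_le_expUtil (uσ j) _ (fun z => hrepbot h uσ hrepσ j tj htb z)
        exact absurd h2 (not_lt.mpr h3)
    -- spreading : a fully-dead agent reaches every outcome with every strategy
    have hspread : ∀ (j : I) (a : Z), (∀ sj : S j, sj ∈ Sz g j a) →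
        ∀ (z : Z) (sj : S j), sj ∈ Sz g j z := by
      intro j a hall z sj
      obtain ⟨h, hinj, ht⟩ := hmktop z
      have hthl := hmkstate h hinj
      obtain ⟨ul, hul, hrepl⟩ := hgetu _ hthl
      have hfl : f (fun (_ : I) (z1 z2 : Z) => h z2 ≤ h z1) = z :=
        hF0 h hinj z ht ul hul hrepl
      obtain ⟨d, hd1, hd2⟩ := XiongAux.exists_max_above g (ul j) j sj
      rcases hd1 with rfl | hRd
      · exact hfl ▸ hDK _ hthl ul hul hrepl j d hd2
      · exact absurd hRd (hnoR a j sj d (ul j) (hall sj) (hall d))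
    -- no dictator means every agent is dead
    have halldead : ∀ (j : I) (z : Z) (sj : S j), sj ∈ Sz g j z := by
      intro j
      have hdf : ∃ θ ∈ Θ, ∃ z, z ≠ f θ ∧ ¬ StrictPref θ j (f θ) z := by
        by_contra hc
        push_neg at hc
        exact hnd ⟨j, fun θ hθ z hz => hc θ hθ z hz⟩
      obtain ⟨θ, hθ, z, hz, hnsp⟩ := hdf
      obtain ⟨u, hu, hrep⟩ := hgetu θ hθ
      have hinj_u : Function.Injective (u j) := by
        intro p q hpq
        exact (hsub2 hθ).2 j p q ((hrep j p q).mpr hpq.ge) ((hrep j q p).mpr hpq.le)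
      have hgt : u j (f θ) < u j z := by
        by_cases hth : θ j (f θ) z
        · have h2 : θ j z (f θ) := by
            by_contra h3
            exact hnsp ⟨hth, h3⟩
          have h4 : u j (f θ) ≤ u j z := (hrep j z (f θ)).mp h2
          refine lt_of_le_of_ne h4 (fun heq => hz ?_)
          exact (hinj_u heq).symm
        · by_contra h4
          exact hth ((hrep j (f θ) z).mpr (not_lt.mp h4))
      obtain ⟨tj, htj⟩ := Finite.exists_max (u j)
      have htjne : tj ≠ f θ := by
        intro heq
        have := htj z
        rw [heq] at this
        exact absurd hgt (not_lt.mpr this)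
      exact hspread j (f θ) (hM2 θ hθ u hu hrep j tj htj htjne)
    -- final contradiction
    obtain ⟨z1, z2, hz12⟩ := Fintype.exists_pair_of_one_lt_card
      (by omega : 1 < Fintype.card Z)
    have s0 : ∀ j, S j := Classical.arbitrary _
    have e1 : g s0 = Lottery.delta z1 := hKpin z1 s0 (fun i => halldead i z1 (s0 i))
    have e2 : g s0 = Lottery.delta z2 := hKpin z2 s0 (fun i => halldead i z2 (s0 i))
    exact hz12 (XiongAux.delta_inj (e1 ▸ e2 : Lottery.delta z1 = Lottery.delta z2))
  · -- Sufficiency: the dictatorship mechanism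
    rintro ⟨i, hdict⟩
    refine ⟨fun _ => Z, fun _ => inferInstance, fun _ => inferInstance,
      fun s => Lottery.delta (s i), ?_⟩
    intro θ hθ u hu hrep
    set G : (∀ _ : I, Z) → Lottery Z := fun s => Lottery.delta (s i) with hG
    have hstrict : ∀ z, z ≠ f θ → u i z < u i (f θ) := by
      intro z hz
      have hsp := hdict θ hθ z hz
      by_contra h4
      exact hsp.2 ((hrep i z (f θ)).mpr (not_lt.mp h4))
    have hGval : ∀ (s : ∀ _ : I, Z) (k : I) (x : Z), (update s k x) i = if k = i then x else s i := by
      intro s k x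
      by_cases hk : k = i
      · subst hk
        rw [update_self, if_pos rfl]
      · rw [update_of_ne (Ne.symm hk), if_neg hk]
    have hnodom_ne : ∀ (k : I), k ≠ i → ∀ (x b : Z), ¬ XiongAux.Rdom G (u k) k x b := by
      intro k hk x b hR
      have h1 := hR (fun _ => f θ)
      have h2 : ∀ y : Z, (update (fun _ : I => f θ) k y) i = f θ := by
        intro y
        rw [update_of_ne (Ne.symm hk)]
      simp only [hG] at h1
      rw [h2 x, h2 b] at h1
      exact lt_irrefl _ h1
    have hdom_i : ∀ (x b : Z), XiongAux.Rdom G (u i) i x b ↔ u i x < u i b := by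
      intro x b
      constructor
      · intro hR
        have h1 := hR (fun _ => f θ)
        simp only [hG] at h1
        rw [update_self, update_self, XiongAux.expUtil_delta, XiongAux.expUtil_delta] at h1
        exact h1
      · intro hlt s
        simp only [hG]
        rw [update_self, update_self, XiongAux.expUtil_delta, XiongAux.expUtil_delta]
        exact hlt
    have hUD : ∀ s : ∀ _ : I, Z, s ∈ UDoneSet u G ↔ s i = f θ := by
      intro s
      constructor
      · intro hs
        have h1 := (XiongAux.mem_UD1 u G i (s i)).mp (hs i)
        by_contra hne'
        exact h1 (f θ) ((hdom_i (s i) (f θ)).mpr (hstrict (s i) hne'))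
      · intro hsi k
        rw [XiongAux.mem_UD1]
        by_cases hk : k = i
        · subst hk
          intro b hb
          have h1 := (hdom_i (s k) b).mp hb
          rw [hsi] at h1
          by_cases hbf : b = f θ
          · rw [hbf] at h1
            exact lt_irrefl _ h1
          · exact absurd h1 (not_lt.mpr (hstrict b hbf).le)
        · exact fun b => hnodom_ne k hk (s k) b
    ext y
    simp only [Set.mem_image, Set.mem_singleton_iff]
    constructor
    · rintro ⟨s, hs, rfl⟩
      simp only [hG]
      rw [(hUD s).mp hs]
    · rintro rfl
      refine ⟨fun _ => f θ, (hUD _).mpr rfl, rfl⟩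
end

section
/- Suppose |Z| = 2. Let (Θ, Ω, f : Θ → Z) be a cardinal implementation problem such that f is surjective and Θ^una ∩ Θ^strict ⊆ Θ ⊆ Θ^strict. Then f can be UD^∞-implemented by some stochastic finite-action mechanism if and only if f is dictatorial. -/
open Function

section XiongAux

open Function

variable {Z : Type} [Fintype Z] [DecidableEq Z]

private lemma xg_univ_pair {a b : Z} (hab : a ≠ b) (hz : ∀ z, z = a ∨ z = b) :
    (Finset.univ : Finset Z) = {a, b} := by
  ext z
  simp only [Finset.mem_univ, true_iff, Finset.mem_insert, Finset.mem_singleton]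
  exact hz z

private lemma xg_sum_pair {a b : Z} (hab : a ≠ b) (hz : ∀ z, z = a ∨ z = b) (h : Z → ℝ) :
    ∑ z, h z = h a + h b := by
  rw [xg_univ_pair hab hz, Finset.sum_pair hab]

private lemma xg_expUtil_delta (v : Z → ℝ) (z : Z) :
    expUtil v (Lottery.delta z) = v z := by
  unfold expUtil Lottery.delta
  simp [ite_mul]

private lemma xg_lottery_sum {a b : Z} (hab : a ≠ b) (hz : ∀ z, z = a ∨ z = b) (y : Lottery Z) :
    y.1 a + y.1 b = 1 := by
  have := y.2.2
  rwa [xg_sum_pair hab hz] at this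

private lemma xg_expUtil_eval {a b : Z} (hab : a ≠ b) (hz : ∀ z, z = a ∨ z = b)
    (v : Z → ℝ) (y : Lottery Z) : expUtil v y = y.1 a * v a + y.1 b * v b :=
  xg_sum_pair hab hz _

private lemma xg_expUtil_le_top {a b : Z} (hab : a ≠ b) (hz : ∀ z, z = a ∨ z = b)
    {v : Z → ℝ} (hv : v b ≤ v a) (y : Lottery Z) : expUtil v y ≤ v a := by
  have h1 := xg_expUtil_eval hab hz v y
  have h2 := xg_lottery_sum hab hz y
  have ha := y.2.1 a
  have hb := y.2.1 b
  have h3 : y.1 a * v a + y.1 b * v a = v a := by rw [← add_mul, h2, one_mul]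
  have h4 := mul_nonneg hb (sub_nonneg.mpr hv)
  nlinarith

private lemma xg_expUtil_ge_bot {a b : Z} (hab : a ≠ b) (hz : ∀ z, z = a ∨ z = b)
    {v : Z → ℝ} (hv : v b ≤ v a) (y : Lottery Z) : v b ≤ expUtil v y := by
  have h1 := xg_expUtil_eval hab hz v y
  have h2 := xg_lottery_sum hab hz y
  have ha := y.2.1 a
  have hb := y.2.1 b
  have h3 : y.1 a * v b + y.1 b * v b = v b := by rw [← add_mul, h2, one_mul]
  have h4 := mul_nonneg ha (sub_nonneg.mpr hv)
  nlinarith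

private lemma xg_eq_delta_bot {a b : Z} (hab : a ≠ b) (hz : ∀ z, z = a ∨ z = b)
    {v : Z → ℝ} (hv : v b < v a) {y : Lottery Z} (hy : expUtil v y ≤ v b) :
    y = Lottery.delta b := by
  have h1 := xg_expUtil_eval hab hz v y
  have h2 := xg_lottery_sum hab hz y
  have ha := y.2.1 a
  have hb := y.2.1 b
  have h3 : y.1 a * v b + y.1 b * v b = v b := by rw [← add_mul, h2, one_mul]
  have hya : y.1 a = 0 := by
    by_contra hne
    have hpos := mul_pos (lt_of_le_of_ne ha (Ne.symm hne)) (sub_pos.mpr hv)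
    nlinarith
  have hyb : y.1 b = 1 := by linarith
  apply Subtype.ext
  funext z
  rcases hz z with rfl | rfl
  · simpa [Lottery.delta, if_neg hab] using hya
  · simpa [Lottery.delta] using hyb

private lemma xg_delta_ne {a b : Z} (hab : a ≠ b) :
    (Lottery.delta a : Lottery Z) ≠ Lottery.delta b := by
  intro h
  have := congrArg (fun y : Lottery Z => y.1 a) h
  simp [Lottery.delta, if_neg hab] at this

variable {I : Type} [DecidableEq I] {S : I → Type}

/-- The limit set of iterated deletion for agent `i`. -/
private def Dset (u : I → Z → ℝ) (g : (∀ i, S i) → Lottery Z) (i : I) : Set (S i) :=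
  ⋂ k, UDk u g (k + 1) i

variable (u : I → Z → ℝ) (g : (∀ i, S i) → Lottery Z)

private lemma xg_mem_Dset {i : I} {si : S i} :
    si ∈ Dset u g i ↔ ∀ k, si ∈ UDk u g (k + 1) i := Set.mem_iInter

private lemma xg_UDk_le_succ (k : ℕ) (i : I) : UDk u g (k + 1) i ⊆ UDk u g k i :=
  fun _ hsi => hsi.1

private lemma xg_UDk_anti {k l : ℕ} (h : k ≤ l) (i : I) : UDk u g l i ⊆ UDk u g k i := by
  induction h with
  | refl => exact subset_rfl
  | step h ih => exact (xg_UDk_le_succ u g _ i).trans ih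

private lemma xg_UDk_succ_eq (m : ℕ) :
    UDk u g (m + 1) = fun i => {si ∈ UDk u g m i | ¬ Dominated u g (UDk u g m) i si} := rfl

private lemma xg_nonDom_subset {T : ∀ j, Set (S j)} (hT : NonDomProp u g T) :
    ∀ k i, T i ⊆ UDk u g k i := by
  intro k
  induction k with
  | zero => exact fun i si _ => Set.mem_univ si
  | succ n ih =>
    intro i si hsi
    refine ⟨ih i hsi, ?_⟩
    rintro ⟨si', hdom⟩
    obtain ⟨s, hs, hle⟩ := hT i si hsi si'
    exact absurd (hdom s fun j hj => ih j (hs j hj)) (not_lt.mpr hle)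

private lemma xg_nonDom_subset_Dset {T : ∀ j, Set (S j)} (hT : NonDomProp u g T) (i : I) :
    T i ⊆ Dset u g i := fun si hsi =>
  (xg_mem_Dset u g).mpr fun k => xg_nonDom_subset u g hT (k + 1) i hsi

private lemma xg_UDk_stab [Finite I] [∀ i, Finite (S i)] :
    ∃ K, ∀ k, K ≤ k → UDk u g k = UDk u g K := by
  obtain ⟨k, l, hkl, he⟩ := Finite.exists_ne_map_eq_of_infinite (fun k : ℕ => UDk u g k)
  wlog hlt : k < l generalizing k l
  · exact this l k hkl.symm he.symm (by omega)
  have hstep : UDk u g (k + 1) = UDk u g k := by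
    funext i
    apply Set.Subset.antisymm (xg_UDk_le_succ u g k i)
    intro si hsi
    have : si ∈ UDk u g l i := by
      have h' := congrFun he i
      rw [← h']
      exact hsi
    exact xg_UDk_anti u g (show k + 1 ≤ l from hlt) i this
  refine ⟨k, fun m hm => ?_⟩
  induction m, hm using Nat.le_induction with
  | base => rfl
  | succ n hn ih =>
    calc UDk u g (n + 1)
        = UDk u g (k + 1) := by rw [xg_UDk_succ_eq, xg_UDk_succ_eq, ih]
      _ = UDk u g k := hstep

private lemma xg_Dset_nonDom [Finite I] [∀ i, Finite (S i)] :
    NonDomProp u g (Dset u g) := by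
  obtain ⟨K, hK⟩ := xg_UDk_stab u g
  have hDset : ∀ i, Dset u g i = UDk u g K i := by
    intro i
    apply Set.Subset.antisymm
    · intro si hsi
      have h1 := (xg_mem_Dset u g).mp hsi K
      rw [hK (K + 1) (Nat.le_succ K)] at h1
      exact h1
    · intro si hsi
      refine (xg_mem_Dset u g).mpr fun k => ?_
      rcases le_total (k + 1) K with h | h
      · exact xg_UDk_anti u g h i hsi
      · rw [hK (k + 1) h]; exact hsi
  intro i si hsi si'
  have h1 := (xg_mem_Dset u g).mp hsi K
  have h2 : ¬ Dominated u g (UDk u g K) i si := h1.2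
  unfold Dominated at h2
  push_neg at h2
  obtain ⟨s, hs, hle⟩ := h2 si'
  refine ⟨s, fun j hj => ?_, hle⟩
  rw [hDset j]
  exact hs j hj

end XiongAux

section XiongImpl

open Function

variable {I Z : Type} [Fintype Z] [DecidableEq Z] [DecidableEq I] {S : I → Type}
variable {Θ : Set (I → Z → Z → Prop)} {Ω : Set (I → Z → ℝ)}
variable {f : (I → Z → Z → Prop) → Z} {g : (∀ i, S i) → Lottery Z}

private lemma xg_impl_mem (himp : UDinfImplements Θ Ω f g)
    {θ} (hθ : θ ∈ Θ) {u} (hu : u ∈ Ω) (hrep : Represents u θ)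
    {s : ∀ i, S i} (hs : ∀ i, s i ∈ Dset u g i) : g s = Lottery.delta (f θ) := by
  have hmem : g s ∈ g '' UDinfSet u g :=
    ⟨s, fun i k => (xg_mem_Dset u g).mp (hs i) k, rfl⟩
  rw [himp θ hθ u hu hrep] at hmem
  exact hmem

private lemma xg_impl_nonempty (himp : UDinfImplements Θ Ω f g)
    {θ} (hθ : θ ∈ Θ) {u} (hu : u ∈ Ω) (hrep : Represents u θ) :
    ∃ s : ∀ i, S i, ∀ i, s i ∈ Dset u g i := by
  have hmem : Lottery.delta (f θ) ∈ g '' UDinfSet u g := by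
    rw [himp θ hθ u hu hrep]
    exact Set.mem_singleton _
  obtain ⟨s, hs, -⟩ := hmem
  exact ⟨s, fun i => (xg_mem_Dset u g).mpr fun k => hs i k⟩

private lemma xg_star [Finite I] [∀ i, Finite (S i)] (himp : UDinfImplements Θ Ω f g)
    {θ} (hθ : θ ∈ Θ) {u} (hu : u ∈ Ω) (hrep : Represents u θ)
    {x w : Z} (hxw : x ≠ w) (hz : ∀ z, z = x ∨ z = w) (hfx : f θ = x)
    {i : I} (hi : u i x < u i w) (si' : S i) :
    ∃ s : ∀ j, S j, (∀ j, j ≠ i → s j ∈ Dset u g j) ∧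
      g (update s i si') = Lottery.delta x := by
  obtain ⟨s0, hs0⟩ := xg_impl_nonempty himp hθ hu hrep
  obtain ⟨s, hs, hle⟩ := xg_Dset_nonDom u g i (s0 i) (hs0 i) si'
  have hmem : ∀ j, update s i (s0 i) j ∈ Dset u g j := by
    intro j
    by_cases hj : j = i
    · subst hj; rw [update_self]; exact hs0 j
    · rw [update_of_ne hj]; exact hs j hj
  have hgs : g (update s i (s0 i)) = Lottery.delta x := by
    rw [xg_impl_mem himp hθ hu hrep hmem, hfx]
  rw [hgs, xg_expUtil_delta] at hle
  have hz' : ∀ z, z = w ∨ z = x := fun z => (hz z).symm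
  exact ⟨s, hs, xg_eq_delta_bot hxw.symm hz' hi hle⟩

private lemma xg_free [Finite I] [∀ i, Finite (S i)] (himp : UDinfImplements Θ Ω f g)
    {θ} (hθ : θ ∈ Θ) {u} (hu : u ∈ Ω) (hrep : Represents u θ)
    {x w : Z} (hxw : x ≠ w) (hz : ∀ z, z = x ∨ z = w) (hfx : f θ = x)
    (hstr : ∀ j, u j x ≠ u j w)
    {i : I} (hi : u i x < u i w) : ∀ si : S i, si ∈ Dset u g i := by
  classical
  set T : ∀ j, Set (S j) := fun j => if j = i then Set.univ else Dset u g j with hTdef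
  have hTD : ∀ j, Dset u g j ⊆ T j := by
    intro j
    by_cases hj : j = i <;> simp [hTdef, hj]
  have hz' : ∀ z, z = w ∨ z = x := fun z => (hz z).symm
  have hnd : NonDomProp u g T := by
    intro j sj hsj sj'
    rcases lt_or_gt_of_ne (hstr j) with hj | hj
    · obtain ⟨s, hs, hgs⟩ := xg_star himp hθ hu hrep hxw hz hfx hj sj'
      refine ⟨s, fun j' hj' => hTD j' (hs j' hj'), ?_⟩
      rw [hgs, xg_expUtil_delta]
      exact xg_expUtil_ge_bot hxw.symm hz' hj.le _
    · obtain ⟨s0, hs0⟩ := xg_impl_nonempty himp hθ hu hrep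
      have hj_ne : j ≠ i := by
        rintro rfl
        exact absurd hi (not_lt.mpr hj.le)
      have hsjD : sj ∈ Dset u g j := by
        have h' := hsj
        rw [hTdef] at h'
        simpa [hj_ne] using h'
      have hmem : ∀ j', update s0 j sj j' ∈ Dset u g j' := by
        intro j'
        by_cases hj' : j' = j
        · subst hj'; rw [update_self]; exact hsjD
        · rw [update_of_ne hj']; exact hs0 j'
      have hgs : g (update s0 j sj) = Lottery.delta x := by
        rw [xg_impl_mem himp hθ hu hrep hmem, hfx]
      refine ⟨s0, fun j' _ => hTD j' (hs0 j'), ?_⟩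
      rw [hgs, xg_expUtil_delta]
      exact xg_expUtil_le_top hxw hz hj.le _
  intro si
  apply xg_nonDom_subset_Dset u g hnd i
  rw [hTdef]
  simp

private lemma xg_transplant [Finite I] [∀ i, Finite (S i)] {ua : I → Z → ℝ}
    {x w : Z} (hxw : x ≠ w) (hz : ∀ z, z = x ∨ z = w)
    (htop : ∀ j, ua j w ≤ ua j x)
    {T : ∀ j, Set (S j)} (hne : ∀ j, (T j).Nonempty)
    (hT : ∀ s : ∀ j, S j, (∀ j, s j ∈ T j) → g s = Lottery.delta x) :
    ∀ j, T j ⊆ Dset ua g j := by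
  apply xg_nonDom_subset_Dset ua g
  intro j sj hsj sj'
  choose s hs using hne
  refine ⟨s, fun j' _ => hs j', ?_⟩
  have h1 : g (update s j sj) = Lottery.delta x := by
    apply hT
    intro j'
    by_cases hj' : j' = j
    · subst hj'; rw [update_self]; exact hsj
    · rw [update_of_ne hj']; exact hs j'
  rw [h1, xg_expUtil_delta]
  exact xg_expUtil_le_top hxw hz (htop j) _

end XiongImpl
section XiongTop

open Function

/-- The unanimous strict preference profile with top outcome `x`. -/
private def xgTop (I : Type) {Z : Type} [DecidableEq Z] (x : Z) : I → Z → Z → Prop :=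
  fun _ z z' => (if z' = x then (1 : ℝ) else 0) ≤ (if z = x then (1 : ℝ) else 0)

private lemma xgTop_mem {I Z : Type} [DecidableEq Z] {x w : Z} (hxw : x ≠ w)
    (hz : ∀ z : Z, z = x ∨ z = w) :
    xgTop I x ∈ ThetaUna I Z ∩ ThetaStrict I Z := by
  have hstar : xgTop I x ∈ ThetaStar I Z := by
    intro i
    exact ⟨fun z z' => le_total _ _, fun z1 z2 z3 h1 h2 => le_trans h2 h1⟩
  refine ⟨⟨hstar, fun i j z z' => Iff.rfl⟩, hstar, ?_⟩
  intro i z z' h1 h2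
  rcases hz z with rfl | rfl <;> rcases hz z' with rfl | rfl
  · rfl
  · exfalso
    unfold xgTop at h2
    rw [if_pos rfl, if_neg (Ne.symm hxw)] at h2
    linarith
  · exfalso
    unfold xgTop at h1
    rw [if_pos rfl, if_neg (Ne.symm hxw)] at h1
    linarith
  · rfl

private lemma xgTop_rep {I Z : Type} [DecidableEq Z] {x w : Z} (hxw : x ≠ w)
    {u : I → Z → ℝ} (hrep : Represents u (xgTop I x)) (i : I) : u i w < u i x := by
  have h1 : xgTop I x i x w := by
    unfold xgTop
    rw [if_pos rfl, if_neg (Ne.symm hxw)]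
    linarith
  have h2 : ¬ xgTop I x i w x := by
    unfold xgTop
    rw [if_pos rfl, if_neg (Ne.symm hxw)]
    intro h
    linarith
  have hle := (hrep i x w).mp h1
  exact lt_of_le_of_ne hle fun he => h2 ((hrep i w x).mpr he.ge)

private lemma xg_rep_strict {I Z : Type} {θ : I → Z → Z → Prop}
    (hstrict : ∀ i z z', θ i z z' → θ i z' z → z = z') {u : I → Z → ℝ}
    (hrep : Represents u θ) {x w : Z} (hxw : x ≠ w) (i : I) : u i x ≠ u i w :=
  fun h => hxw (hstrict i x w ((hrep i x w).mpr h.ge) ((hrep i w x).mpr h.le))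

private lemma xg_side {I Z : Type} [Fintype I] [Fintype Z] [DecidableEq I] [DecidableEq Z]
    {Θ : Set (I → Z → Z → Prop)} {Ω : Set (I → Z → ℝ)} {f : (I → Z → Z → Prop) → Z}
    (hCIP : CIProblem Θ Ω) (hsurj : ∀ z : Z, ∃ θ ∈ Θ, f θ = z)
    (hsub2 : Θ ⊆ ThetaStrict I Z)
    {S : I → Type} [∀ i, Finite (S i)] {g : (∀ i, S i) → Lottery Z}
    (himp : UDinfImplements Θ Ω f g)
    {x w : Z} (hxw : x ≠ w) (hz : ∀ z, z = x ∨ z = w)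
    {θx} (hθx : θx ∈ Θ) {ux} (hux : ux ∈ Ω) (hrepx : Represents ux θx)
    (htopx : ∀ i, ux i w < ux i x) :
    f θx = x ∧
      (∀ i, (¬ ∀ θ ∈ Θ, f θ = x → θ i x w) → ∀ si : S i, si ∈ Dset ux g i) := by
  have hstrall : ∀ θ ∈ Θ, ∀ (u : I → Z → ℝ), Represents u θ → ∀ i, u i x ≠ u i w :=
    fun θ hθ u hrep i => xg_rep_strict (hsub2 hθ).2 hrep hxw i
  have hfx : f θx = x := by
    by_contra hne
    have hfw : f θx = w := (hz (f θx)).resolve_left hne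
    have hall : ∀ i, ∀ si : S i, si ∈ Dset ux g i := by
      intro i
      exact xg_free himp hθx hux hrepx hxw.symm (fun z => (hz z).symm) hfw
        (fun j => (hstrall θx hθx ux hrepx j).symm) (htopx i)
    obtain ⟨θ', hθ', hfθ'⟩ := hsurj x
    obtain ⟨u', hu', hrep'⟩ := hCIP.2.2 θ' hθ'
    obtain ⟨s', hs'⟩ := xg_impl_nonempty himp hθ' hu' hrep'
    have h1 : g s' = Lottery.delta x := by
      rw [xg_impl_mem himp hθ' hu' hrep' hs', hfθ']
    have h2 : g s' = Lottery.delta w := by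
      rw [xg_impl_mem himp hθx hux hrepx (fun i => hall i (s' i)), hfw]
    exact xg_delta_ne hxw (h1.symm.trans h2)
  refine ⟨hfx, ?_⟩
  intro i hCai
  push_neg at hCai
  obtain ⟨θ, hθ, hfθ, hni⟩ := hCai
  obtain ⟨u', hu', hrep'⟩ := hCIP.2.2 θ hθ
  have hθiwx : θ i w x := (((hsub2 hθ).1 i).1 x w).resolve_left hni
  have hlt : u' i x < u' i w :=
    lt_of_le_of_ne ((hrep' i w x).mp hθiwx) (hstrall θ hθ u' hrep' i)
  have hfree : ∀ si : S i, si ∈ Dset u' g i :=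
    xg_free himp hθ hu' hrep' hxw hz hfθ (hstrall θ hθ u' hrep') hlt
  obtain ⟨s0, hs0⟩ := xg_impl_nonempty himp hθ hu' hrep'
  have htrans := xg_transplant (g := g) hxw hz (fun j => (htopx j).le)
      (T := Dset u' g) (fun j => ⟨s0 j, hs0 j⟩)
      (fun s hs => by rw [xg_impl_mem himp hθ hu' hrep' hs, hfθ])
  exact fun si => htrans i (hfree si)

end XiongTop
/-- **Theorem 2 (Xiong).** Suppose `|Z| = 2`. In any cardinal implementation problem with
`f` surjective and `Θ^una ∩ Θ^strict ⊆ Θ ⊆ Θ^strict`, `f` can be UD^∞-implemented by a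
stochastic finite-action mechanism iff `f` is dictatorial. -/
theorem UDinf_implementable_iff_dictatorial_two_outcomes
    {I Z : Type} [Fintype I] [Fintype Z] [DecidableEq I] [DecidableEq Z]
    (hI : 2 ≤ Fintype.card I) (hZ : Fintype.card Z = 2)
    (Θ : Set (I → Z → Z → Prop)) (Ω : Set (I → Z → ℝ)) (f : (I → Z → Z → Prop) → Z)
    (hCIP : CIProblem Θ Ω)
    (hsurj : ∀ z : Z, ∃ θ ∈ Θ, f θ = z)
    (hsub1 : ThetaUna I Z ∩ ThetaStrict I Z ⊆ Θ) (hsub2 : Θ ⊆ ThetaStrict I Z) :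
    (∃ (S : I → Type) (_ : ∀ i, Finite (S i)) (_ : ∀ i, Nonempty (S i))
        (g : (∀ i, S i) → Lottery Z), UDinfImplements Θ Ω f g) ↔
      ∃ i : I, Dictator Θ f i := by
  classical
  have h2 : Nat.card Z = 2 := by simp [Nat.card_eq_fintype_card, hZ]
  obtain ⟨a, b, hab, huniv⟩ := Nat.card_eq_two_iff.mp h2
  have hz : ∀ z : Z, z = a ∨ z = b := fun z => by
    have hm : z ∈ ({a, b} : Set Z) := huniv ▸ Set.mem_univ z
    simpa using hm
  constructor
  · rintro ⟨S, hSfin, hSne, g, himp⟩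
    haveI : ∀ i, Finite (S i) := hSfin
    by_contra hnd
    have hθaTh : xgTop I a ∈ Θ := hsub1 (xgTop_mem hab hz)
    have hθbTh : xgTop I b ∈ Θ := hsub1 (xgTop_mem hab.symm (fun z => (hz z).symm))
    obtain ⟨ua, hua, hrepa⟩ := hCIP.2.2 _ hθaTh
    obtain ⟨ub, hub, hrepb⟩ := hCIP.2.2 _ hθbTh
    have htopa : ∀ i, ua i b < ua i a := xgTop_rep hab hrepa
    have htopb : ∀ i, ub i a < ub i b := xgTop_rep hab.symm hrepb
    obtain ⟨hfa, hCa⟩ := xg_side hCIP hsurj hsub2 himp hab hz hθaTh hua hrepa htopa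
    obtain ⟨hfb, hCb⟩ := xg_side hCIP hsurj hsub2 himp hab.symm (fun z => (hz z).symm)
      hθbTh hub hrepb htopb
    have hdisj : ∀ i, (∀ θ ∈ Θ, f θ = a → θ i a b) →
        (∀ θ ∈ Θ, f θ = b → θ i b a) → False := by
      intro i hia hib
      apply hnd
      refine ⟨i, fun θ hθ z hzne => ?_⟩
      rcases hz (f θ) with hfθ | hfθ
      · have hzb : z = b := (hz z).resolve_left (fun h => hzne (h.trans hfθ.symm))
        rw [hfθ, hzb]
        have h1 : θ i a b := hia θ hθ hfθ
        exact ⟨h1, fun hcon => hab ((hsub2 hθ).2 i a b h1 hcon)⟩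
      · have hza : z = a := (hz z).resolve_right (fun h => hzne (h.trans hfθ.symm))
        rw [hfθ, hza]
        have h1 : θ i b a := hib θ hθ hfθ
        exact ⟨h1, fun hcon => hab ((hsub2 hθ).2 i b a h1 hcon).symm⟩
    obtain ⟨sa, hsa⟩ := xg_impl_nonempty himp hθaTh hua hrepa
    obtain ⟨sb, hsb⟩ := xg_impl_nonempty himp hθbTh hub hrepb
    set s : ∀ j, S j := fun j => if ∀ θ ∈ Θ, f θ = a → θ j a b then sa j else sb j with hsdef
    have hAmem : ∀ j, s j ∈ Dset ua g j := by
      intro j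
      by_cases hj : ∀ θ ∈ Θ, f θ = a → θ j a b
      · simp only [hsdef, if_pos hj]
        exact hsa j
      · simp only [hsdef, if_neg hj]
        exact hCa j hj _
    have hBmem : ∀ j, s j ∈ Dset ub g j := by
      intro j
      by_cases hj : ∀ θ ∈ Θ, f θ = a → θ j a b
      · simp only [hsdef, if_pos hj]
        exact hCb j (fun hjb => hdisj j hj hjb) _
      · simp only [hsdef, if_neg hj]
        exact hsb j
    have h1 : g s = Lottery.delta a := by rw [xg_impl_mem himp hθaTh hua hrepa hAmem, hfa]
    have h2 : g s = Lottery.delta b := by rw [xg_impl_mem himp hθbTh hub hrepb hBmem, hfb]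
    exact xg_delta_ne hab (h1.symm.trans h2)
  · rintro ⟨i, hdict⟩
    refine ⟨fun _ => Z, fun _ => inferInstance, fun _ => ⟨a⟩,
      fun s => Lottery.delta (s i), fun θ hθ u hu hrep => ?_⟩
    have htop : ∀ z, z ≠ f θ → u i z < u i (f θ) := by
      intro z hz0
      have hsp := hdict θ hθ z hz0
      have hle := (hrep i (f θ) z).mp hsp.1
      exact lt_of_le_of_ne hle fun he => hsp.2 ((hrep i z (f θ)).mpr he.ge)
    have hclaim : ∀ k,
        (∀ j, j ≠ i → ∀ sj : Z, sj ∈ UDk u (fun s : ∀ _ : I, Z => Lottery.delta (s i)) k j) ∧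
          f θ ∈ UDk u (fun s : ∀ _ : I, Z => Lottery.delta (s i)) k i := by
      intro k
      induction k with
      | zero => exact ⟨fun j _ sj => Set.mem_univ sj, Set.mem_univ _⟩
      | succ n ih =>
        constructor
        · intro j hj sj
          refine ⟨ih.1 j hj sj, ?_⟩
          rintro ⟨sj', hdom⟩
          have hcoord : ∀ l, l ≠ j →
              (fun _ : I => f θ) l ∈ UDk u (fun s : ∀ _ : I, Z => Lottery.delta (s i)) n l := by
            intro l hl
            by_cases hli : l = i
            · subst hli
              exact ih.2
            · exact ih.1 l hli _
          have hlt := hdom (fun _ => f θ) hcoord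
          have e1 : update (fun _ : I => f θ) j sj i = update (fun _ : I => f θ) j sj' i := by
            rw [update_of_ne (Ne.symm hj), update_of_ne (Ne.symm hj)]
          simp only [e1] at hlt
          exact lt_irrefl _ hlt
        · refine ⟨ih.2, ?_⟩
          rintro ⟨si', hdom⟩
          have hcoord : ∀ l, l ≠ i →
              (fun _ : I => f θ) l ∈ UDk u (fun s : ∀ _ : I, Z => Lottery.delta (s i)) n l :=
            fun l hl => ih.1 l hl _
          have hlt := hdom (fun _ => f θ) hcoord
          simp only [update_self] at hlt
          rw [xg_expUtil_delta, xg_expUtil_delta] at hlt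
          rcases eq_or_ne si' (f θ) with rfl | hne
          · exact lt_irrefl _ hlt
          · exact absurd hlt (not_lt.mpr (htop si' hne).le)
    have hkey : ∀ s : ∀ _ : I, Z,
        s ∈ UDinfSet u (fun s : ∀ _ : I, Z => Lottery.delta (s i)) → s i = f θ := by
      intro s hs
      by_contra hne
      apply (hs i 0).2
      refine ⟨f θ, fun s' _ => ?_⟩
      simp only [update_self]
      rw [xg_expUtil_delta, xg_expUtil_delta]
      exact htop (s i) hne
    ext y
    simp only [Set.mem_image, Set.mem_singleton_iff]
    constructor
    · rintro ⟨s, hs, rfl⟩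
      exact congrArg Lottery.delta (hkey s hs)
    · rintro rfl
      refine ⟨fun _ => f θ, fun j k => ?_, rfl⟩
      by_cases hji : j = i
      · subst hji
        exact (hclaim (k + 1)).2
      · exact (hclaim (k + 1)).1 j hji _
end

section
/- Suppose |Z| = 2. Let (Θ, Ω, f : Θ → Z) be a cardinal implementation problem such that f is surjective. If f is UD^∞-implemented by a stochastic finite-action mechanism M = ⟨S, g⟩ and agent i ∈ I is not a dictator, then ∩_{z∈Z} S_i^z ≠ ∅. -/
open Function

section aux

open Function

variable {Z : Type} [Fintype Z] {I : Type} [DecidableEq I] {S : I → Type}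

lemma sum_univ_two_aux [DecidableEq Z] {a b : Z} (hab : a ≠ b)
    (hall : ∀ z : Z, z = a ∨ z = b) (F : Z → ℝ) : ∑ z, F z = F a + F b := by
  have huniv : (Finset.univ : Finset Z) = {a, b} := by
    ext z; simpa using hall z
  rw [huniv, Finset.sum_pair hab]

lemma UDk_anti_aux (u : I → Z → ℝ) (g : (∀ i, S i) → Lottery Z) (j : I) :
    Antitone (fun m => UDk u g m j) :=
  antitone_nat_of_succ_le (fun _ _ h => h.1)

lemma survive_forever_aux (u : I → Z → ℝ) (g : (∀ i, S i) → Lottery Z) (i : I)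
    (hfin : Finite (S i))
    (shat : ∀ j, S j) (hshat : ∀ j k, shat j ∈ UDk u g (k + 1) j)
    (s0 : S i) (c : ℝ)
    (hP0 : c < expUtil (u i) (g (update shat i s0))) :
    ∃ si : S i, (∀ k, si ∈ UDk u g k i) ∧ c < expUtil (u i) (g (update shat i si)) := by
  classical
  have hshatk : ∀ j k, shat j ∈ UDk u g k j := by
    intro j k
    cases k with
    | zero => trivial
    | succ n => exact hshat j n
  have hanti : ∀ {k l : ℕ}, k ≤ l → ∀ j, UDk u g l j ⊆ UDk u g k j :=
    fun {k l} hkl j => UDk_anti_aux u g j hkl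
  have step : ∀ k si, si ∈ UDk u g k i → c < expUtil (u i) (g (update shat i si)) →
      ∃ m, m ∈ UDk u g (k + 1) i ∧ c < expUtil (u i) (g (update shat i m)) := by
    intro k si hmem hP
    by_cases hd : Dominated u g (UDk u g k) i si
    · set dom : S i → S i → Prop := fun x y => ∀ s : ∀ j, S j,
        (∀ j, j ≠ i → s j ∈ UDk u g k j) →
          expUtil (u i) (g (update s i x)) < expUtil (u i) (g (update s i y)) with hdomdef
      have hadm : ∀ j, j ≠ i → shat j ∈ UDk u g k j := fun j _ => hshatk j k
      have htrans : ∀ {x y z}, dom x y → dom y z → dom x z := by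
        intro x y z h1 h2 s hs; exact (h1 s hs).trans (h2 s hs)
      have hdsi : ∃ y, dom si y := hd
      obtain ⟨y0, hy0⟩ := hdsi
      have hwf : WellFounded (fun x y : S i => dom y x) := by
        haveI : IsTrans (S i) (fun x y => dom y x) := ⟨fun a b c h1 h2 => htrans h2 h1⟩
        haveI : IsIrrefl (S i) (fun x y => dom y x) :=
          ⟨fun x h => lt_irrefl _ (h shat hadm)⟩
        exact Finite.wellFounded_of_trans_of_irrefl _
      obtain ⟨m, hmA, hmmax⟩ := hwf.has_min {y | dom si y} ⟨y0, hy0⟩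
      have hmnotdom : ∀ y, ¬ dom m y := fun y hy => hmmax y (htrans hmA hy) hy
      have helim : ∀ (k' : ℕ) (x : S i), x ∉ UDk u g k' i →
          ∃ j1, j1 < k' ∧ x ∈ UDk u g j1 i ∧ Dominated u g (UDk u g j1) i x := by
        intro k'
        induction k' with
        | zero => intro x hx; exact absurd trivial hx
        | succ n ih =>
          intro x hx
          by_cases hxn : x ∈ UDk u g n i
          · refine ⟨n, Nat.lt_succ_self n, hxn, ?_⟩
            by_contra h
            exact hx ⟨hxn, h⟩
          · obtain ⟨j1, hj1, hmem', hdom'⟩ := ih x hxn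
            exact ⟨j1, hj1.trans (Nat.lt_succ_self n), hmem', hdom'⟩
      have hmmem : m ∈ UDk u g k i := by
        by_contra hmn
        obtain ⟨j1, hj1k, hj1mem, hdom1⟩ := helim k m hmn
        obtain ⟨y, hy⟩ := hdom1
        exact hmnotdom y (fun s hs => hy s (fun j hj => hanti (le_of_lt hj1k) j (hs j hj)))
      refine ⟨m, ⟨hmmem, ?_⟩, hP.trans (hmA shat hadm)⟩
      rintro ⟨y, hy⟩
      exact hmnotdom y hy
    · exact ⟨si, ⟨hmem, hd⟩, hP⟩
  have claim : ∀ k, ∃ si, si ∈ UDk u g k i ∧ c < expUtil (u i) (g (update shat i si)) := by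
    intro k
    induction k with
    | zero => exact ⟨s0, trivial, hP0⟩
    | succ n ih =>
      obtain ⟨si, h1, h2⟩ := ih
      exact step n si h1 h2
  choose cc h1 h2 using claim
  obtain ⟨si, hfib⟩ := Finite.exists_infinite_fiber cc
  have hfib' : (cc ⁻¹' {si}).Infinite := Set.infinite_coe_iff.mp hfib
  obtain ⟨k0, hk0⟩ := hfib'.nonempty
  have hk0' : cc k0 = si := hk0
  refine ⟨si, ?_, hk0' ▸ h2 k0⟩
  intro k
  obtain ⟨m, hm, hkm⟩ := hfib'.exists_gt k
  have hmeq : cc m = si := hm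
  exact hmeq ▸ hanti (le_of_lt hkm) i (h1 m)

end aux

/-- **Lemma 4 (Xiong).** Suppose `|Z| = 2`. If `f` is surjective and UD^∞-implemented by a
stochastic finite-action mechanism `⟨S, g⟩` and agent `i` is not a dictator, then
`∩_{z ∈ Z} S_i^z ≠ ∅`. -/
theorem non_dictator_inter_Sz_nonempty
    {I Z : Type} [Fintype I] [Fintype Z] [DecidableEq I] [DecidableEq Z]
    (hI : 2 ≤ Fintype.card I) (hZ : Fintype.card Z = 2)
    (Θ : Set (I → Z → Z → Prop)) (Ω : Set (I → Z → ℝ)) (f : (I → Z → Z → Prop) → Z)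
    (hCIP : CIProblem Θ Ω)
    (hsurj : ∀ z : Z, ∃ θ ∈ Θ, f θ = z)
    (S : I → Type) (hfin : ∀ i, Finite (S i)) (hne : ∀ i, Nonempty (S i))
    (g : (∀ i, S i) → Lottery Z) (himp : UDinfImplements Θ Ω f g)
    (i : I) (hnd : ¬ Dictator Θ f i) :
    (⋂ z : Z, Sz g i z).Nonempty := by
  classical
  simp only [Dictator] at hnd
  push_neg at hnd
  obtain ⟨θ, hθΘ, b, hbne, hnstrict⟩ := hnd
  set a := f θ with ha
  have hab : a ≠ b := hbne.symm
  -- Z = {a, b}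
  have hall : ∀ z : Z, z = a ∨ z = b := by
    intro z
    by_contra hzc
    push_neg at hzc
    have h3 : ({z, a, b} : Finset Z).card = 3 := by
      rw [Finset.card_insert_of_notMem (by simp [hzc.1, hzc.2]),
        Finset.card_insert_of_notMem (by simp [hab]), Finset.card_singleton]
    have hle := Finset.card_le_univ ({z, a, b} : Finset Z)
    rw [h3] at hle
    omega
  -- i weakly prefers b to a at θ
  have hba : θ i b a := by
    rcases (hCIP.1 hθΘ i).1 b a with h | h
    · exact h
    · by_contra hc
      exact hnstrict ⟨h, hc⟩
  obtain ⟨u, huΩ, hurep⟩ := hCIP.2.2 θ hθΘ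
  have huab : u i a ≤ u i b := (hurep i b a).1 hba
  have himg : g '' UDinfSet u g = {Lottery.delta a} := himp θ hθΘ u huΩ hurep
  have hda : Lottery.delta a ∈ g '' UDinfSet u g := by rw [himg]; rfl
  obtain ⟨shat, hshatmem, hshatg⟩ := hda
  have hshatk : ∀ j k, shat j ∈ UDk u g k j := by
    intro j k
    cases k with
    | zero => trivial
    | succ n => exact hshatmem j n
  have hUDclosed : ∀ s ∈ UDinfSet u g, g s = Lottery.delta a := by
    intro s hs
    have := Set.mem_image_of_mem g hs
    rw [himg] at this
    exact this
  -- the state with f = b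
  obtain ⟨θb, hθbΘ, hfb⟩ := hsurj b
  obtain ⟨ub, hubΩ, hubrep⟩ := hCIP.2.2 θb hθbΘ
  have himgb : g '' UDinfSet ub g = {Lottery.delta b} := by
    have := himp θb hθbΘ ub hubΩ hubrep
    rw [hfb] at this
    exact this
  have hdb : Lottery.delta b ∈ g '' UDinfSet ub g := by rw [himgb]; rfl
  obtain ⟨sstar, hsstarmem, hsstarg⟩ := hdb
  -- expUtil computations
  have hexp : ∀ y : Lottery Z, expUtil (u i) y = y.1 a * u i a + y.1 b * u i b :=
    fun y => sum_univ_two_aux hab hall _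
  have hsum1 : ∀ y : Lottery Z, y.1 a + y.1 b = 1 := by
    intro y
    have := y.2.2
    rwa [sum_univ_two_aux hab hall] at this
  have hdeltab0 : (Lottery.delta a).1 b = 0 := by
    simp [Lottery.delta, hbne]
  have hexpdelta : expUtil (u i) (Lottery.delta a) = u i a := by
    rw [hexp]
    simp [Lottery.delta, hbne]
  -- key claim: sstar i ∈ Sz g i a
  have hkey : sstar i ∈ Sz g i a := by
    rcases lt_or_eq_of_le huab with hlt | heq
    · -- strict preference case
      by_contra hna
      have hpos : ∀ t : ∀ j, S j, 0 < (g (update t i (sstar i))).1 b := by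
        intro t
        have hne' : g (update t i (sstar i)) ≠ Lottery.delta a := by
          intro h
          exact hna ⟨update t i (sstar i), Function.update_self i (sstar i) t, h⟩
        rcases lt_or_eq_of_le ((g (update t i (sstar i))).2.1 b) with h | h
        · exact h
        · exfalso
          apply hne'
          apply Subtype.ext
          funext z
          rcases hall z with rfl | rfl
          · rw [show ((Lottery.delta a).1 a) = 1 from by simp [Lottery.delta]]
            have hs := hsum1 (g (update t i (sstar i)))
            rw [← h] at hs
            linarith
          · rw [hdeltab0]
            exact h.symm
      have hP0 : u i a < expUtil (u i) (g (update shat i (sstar i))) := by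
        rw [hexp]
        have h1 := hsum1 (g (update shat i (sstar i)))
        have h2 := hpos shat
        have h3 : (g (update shat i (sstar i))).1 a
            = 1 - (g (update shat i (sstar i))).1 b := by linarith
        rw [h3]
        nlinarith [mul_pos h2 (sub_pos.mpr hlt)]
      obtain ⟨si, hsik, hP⟩ :=
        survive_forever_aux u g i (hfin i) shat hshatmem (sstar i) (u i a) hP0
      have hmem2 : update shat i si ∈ UDinfSet u g := by
        intro j k
        rcases eq_or_ne j i with rfl | hji
        · rw [Function.update_self]
          exact hsik (k + 1)
        · rw [Function.update_of_ne hji]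
          exact hshatmem j k
      have hga : g (update shat i si) = Lottery.delta a := hUDclosed _ hmem2
      rw [hga, hexpdelta] at hP
      exact lt_irrefl _ hP
    · -- indifference case: i's expected utility is constant
      have hconst : ∀ y : Lottery Z, expUtil (u i) y = u i a := by
        intro y
        rw [hexp, ← heq]
        have := hsum1 y
        linear_combination u i a * this
      have hsurv : ∀ k, sstar i ∈ UDk u g k i := by
        intro k
        induction k with
        | zero => trivial
        | succ n ih =>
          refine ⟨ih, ?_⟩
          rintro ⟨si', hdom⟩
          have hlt := hdom shat (fun j _ => hshatk j n)
          rw [hconst, hconst] at hlt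
          exact lt_irrefl _ hlt
      have hmem2 : update shat i (sstar i) ∈ UDinfSet u g := by
        intro j k
        rcases eq_or_ne j i with rfl | hji
        · rw [Function.update_self]
          exact hsurv (k + 1)
        · rw [Function.update_of_ne hji]
          exact hshatmem j k
      exact ⟨update shat i (sstar i), Function.update_self i (sstar i) shat,
        hUDclosed _ hmem2⟩
  refine ⟨sstar i, Set.mem_iInter.mpr fun z => ?_⟩
  rcases hall z with rfl | rfl
  · exact hkey
  · exact ⟨sstar, rfl, hsstarg⟩
end
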